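/- arXiv:2410.23912 — 6 statements merged into one kernel-verified Lean document; each statement's English description precedes it below -/
import Mathlib

section
/- Define the sequence δ_0 ∈ (0, 1/2) and δ_{t} = δ_{t-1} / (2(1/4 + δ_{t-1}²)) for t ≥ 1. Then the sequence (δ_t) is strictly increasing and converges to 1/2. -/
/-!
The map `x ↦ x / (2 (1/4 + x²)) = 2x / (1 + 4x²)` sends `(0, 1/2)` into itself and lies strictly
above the diagonal there, because `2x / (1 + 4x²) - x = x (1 - 4x²) / (1 + 4x²)`; it never reaches
`1/2` except at `1/2`, since `1 + 4x² - 4x = (1 - 2x)²`. Hence `δ` is strictly increasing and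
bounded by `1/2`, so it converges, and by continuity its limit is a positive fixed point, which
can only be `1/2`.
-/

open Filter Topology

noncomputable def deltaStep (x : ℝ) : ℝ := x / (2 * (1/4 + x^2))

lemma deltaStep_pos {x : ℝ} (hx : 0 < x) : 0 < deltaStep x := by
  unfold deltaStep; positivity

lemma deltaStep_lt_half {x : ℝ} (hx : x ≠ 1/2) : deltaStep x < 1/2 := by
  have hsq : 0 < (x - 1/2)^2 := by positivity [sub_ne_zero.2 hx]
  rw [deltaStep, div_lt_iff₀ (by positivity)]
  nlinarith

lemma lt_deltaStep {x : ℝ} (hx₀ : 0 < x) (hx₁ : x < 1/2) : x < deltaStep x := by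
  rw [deltaStep, lt_div_iff₀ (by positivity)]
  nlinarith

lemma continuous_deltaStep : Continuous deltaStep :=
  continuous_id.div (by fun_prop) fun x => by positivity

lemma eq_half_of_deltaStep_eq {x : ℝ} (hx : 0 < x) (hfix : deltaStep x = x) : x = 1/2 := by
  rw [deltaStep, div_eq_iff (by positivity)] at hfix
  nlinarith

section Iteration

variable {d : ℕ → ℝ} (h0 : d 0 ∈ Set.Ioo (0:ℝ) (1/2)) (hrec : ∀ t, d (t+1) = deltaStep (d t))
include h0 hrec

lemma mem_Ioo_of_deltaStep_rec (t : ℕ) : d t ∈ Set.Ioo (0:ℝ) (1/2) := by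
  induction t with
  | zero => exact h0
  | succ t ih =>
    rw [hrec t]
    exact ⟨deltaStep_pos ih.1, deltaStep_lt_half ih.2.ne⟩

lemma strictMono_of_deltaStep_rec : StrictMono d :=
  strictMono_nat_of_lt_succ fun t => by
    obtain ⟨hpos, hlt⟩ := mem_Ioo_of_deltaStep_rec h0 hrec t
    exact (hrec t).symm ▸ lt_deltaStep hpos hlt

lemma tendsto_half_of_deltaStep_rec : Tendsto d atTop (𝓝 (1/2)) := by
  have hbdd : BddAbove (Set.range d) := by
    refine ⟨1/2, ?_⟩
    rintro _ ⟨t, rfl⟩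
    exact (mem_Ioo_of_deltaStep_rec h0 hrec t).2.le
  have hlim := tendsto_atTop_ciSup (strictMono_of_deltaStep_rec h0 hrec).monotone hbdd
  have hpos : 0 < ⨆ t, d t := h0.1.trans_le (le_ciSup hbdd 0)
  have hfix : deltaStep (⨆ t, d t) = ⨆ t, d t := by
    refine tendsto_nhds_unique ((continuous_deltaStep.tendsto _).comp hlim) ?_
    simpa only [Function.comp_def, ← hrec] using (tendsto_add_atTop_iff_nat 1).2 hlim
  rwa [eq_half_of_deltaStep_eq hpos hfix] at hlim

end Iteration

theorem stmt_1 (d : ℕ → ℝ) (h0 : d 0 ∈ Set.Ioo (0:ℝ) (1/2))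
    (hrec : ∀ t : ℕ, d (t+1) = d t / (2 * (1/4 + (d t)^2))) :
    StrictMono d ∧ Tendsto d atTop (𝓝 (1/2)) :=
  ⟨strictMono_of_deltaStep_rec h0 hrec, tendsto_half_of_deltaStep_rec h0 hrec⟩
end

section
/- Fix an integer M ≥ 2 and δ ∈ (0, 1 - 1/M). Let α = 1/M + δ and β = 1/M - δ/(M-1). Then α² / (α² + (M-1)β²) > α and α² / (α² + (M-1)β²) < 1. -/
/-!
Write `c = M - 1`. The masses `α` and `β` form a probability vector (`α + c β = 1`) with
`0 < β < α`. Squaring and renormalising pushes mass towards the largest entry: with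
`D = α² + c β²` we get `α - D = c β (α - β) > 0`, so `α²/D > α`, while `D - α² = c β² > 0`
gives `α²/D < 1`.
-/

lemma lt_sq_div_sq_add_mul_sq {a b c : ℝ} (hc : 0 < c) (hb : 0 < b) (hba : b < a)
    (hsum : a + c * b = 1) : a < a ^ 2 / (a ^ 2 + c * b ^ 2) := by
  have hD : 0 < a ^ 2 + c * b ^ 2 := by positivity
  rw [lt_div_iff₀ hD]
  have hgap : a * (a + c * b) - (a ^ 2 + c * b ^ 2) = c * b * (a - b) := by ring
  rw [hsum, mul_one] at hgap
  have hDa : a ^ 2 + c * b ^ 2 < a := by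
    have : 0 < c * b * (a - b) := mul_pos (mul_pos hc hb) (sub_pos.mpr hba)
    linarith
  linarith [mul_lt_mul_of_pos_left hDa (hb.trans hba)]

lemma sq_div_sq_add_mul_sq_lt_one {a b c : ℝ} (hb : b ≠ 0) (hc : 0 < c) :
    a ^ 2 / (a ^ 2 + c * b ^ 2) < 1 := by
  have hcb : 0 < c * b ^ 2 := by positivity
  rw [div_lt_one (by positivity)]
  linarith

theorem stmt_4 (M : ℕ) (hM : 2 ≤ M) (δ : ℝ) (hδ : δ ∈ Set.Ioo (0:ℝ) (1 - 1/(M:ℝ)))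
    (α β : ℝ) (hα : α = 1/(M:ℝ) + δ) (hβ : β = 1/(M:ℝ) - δ/((M:ℝ) - 1)) :
    α < α^2 / (α^2 + ((M:ℝ) - 1) * β^2) ∧ α^2 / (α^2 + ((M:ℝ) - 1) * β^2) < 1 := by
  obtain ⟨hδ0, hδ1⟩ := hδ
  have hM' : (2:ℝ) ≤ M := by exact_mod_cast hM
  have hc : (0:ℝ) < M - 1 := by linarith
  have hβ0 : 0 < β := by
    rw [hβ, sub_pos, div_lt_div_iff₀ hc (by linarith)]
    have : δ * M < M - 1 := by
      calc δ * M < (1 - 1 / M) * M := by gcongr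
        _ = M - 1 := by field_simp
    linarith
  have hβα : β < α := by
    rw [hα, hβ]
    linarith [div_pos hδ0 hc]
  have hsum : α + ((M:ℝ) - 1) * β = 1 := by
    rw [hα, hβ]; field_simp; ring
  exact ⟨lt_sq_div_sq_add_mul_sq hc hβ0 hβα hsum,
    sq_div_sq_add_mul_sq_lt_one hβ0.ne' hc⟩
end

section
/- Fix M ≥ 2 and δ ∈ (0, 1 - 1/M). With α = 1/M + δ and β = 1/M - δ/(M-1), the updated value δ' defined by α²/(α² + (M-1)β²) = 1/M + δ' satisfies δ' = δ(δM² - 2δM + 2M - 2)/(δ²M² + M - 1), and moreover δ < δ' < 1 - 1/M. -/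
/-!
Writing `D = δ²M² + M - 1`, the normalising sum simplifies to `α² + (M-1)β² = D / (M(M-1))`, which
gives the closed form for `δ'`. The two bounds then come from the factorisations
`δ' - δ = δ (M - 1 - δM)(1 + δM) / D` and `(1 - 1/M) - δ' = (M - 1 - δM)² / (M D)`, whose factors are
positive because `0 < δ < 1 - 1/M`, i.e. `0 < δM < M - 1`.
-/

noncomputable def improvedDeviation (M δ : ℝ) : ℝ :=
  δ * (δ * M ^ 2 - 2 * δ * M + 2 * M - 2) / (δ ^ 2 * M ^ 2 + M - 1)

section improvedDeviation

variable {M δ : ℝ}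

theorem improvedDeviation_eq (hM : M ≠ 0) (hM1 : M - 1 ≠ 0) (hD : δ ^ 2 * M ^ 2 + M - 1 ≠ 0) :
    (1 / M + δ) ^ 2 / ((1 / M + δ) ^ 2 + (M - 1) * (1 / M - δ / (M - 1)) ^ 2) - 1 / M =
      improvedDeviation M δ := by
  have hS : (1 / M + δ) ^ 2 + (M - 1) * (1 / M - δ / (M - 1)) ^ 2 =
      (δ ^ 2 * M ^ 2 + M - 1) / (M * (M - 1)) := by
    field_simp
    ring
  rw [hS, improvedDeviation, div_div_eq_mul_div, div_sub_div _ _ hD hM,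
    div_eq_div_iff (mul_ne_zero hD hM) hD]
  field_simp
  ring

theorem improvedDeviation_sub_self (hD : δ ^ 2 * M ^ 2 + M - 1 ≠ 0) :
    improvedDeviation M δ - δ = δ * (M - 1 - δ * M) * (1 + δ * M) / (δ ^ 2 * M ^ 2 + M - 1) := by
  rw [improvedDeviation, div_sub' hD]
  ring

theorem one_sub_inv_sub_improvedDeviation (hM : M ≠ 0) (hD : δ ^ 2 * M ^ 2 + M - 1 ≠ 0) :
    1 - 1 / M - improvedDeviation M δ = (M - 1 - δ * M) ^ 2 / (M * (δ ^ 2 * M ^ 2 + M - 1)) := by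
  rw [improvedDeviation, one_sub_div hM, div_sub_div _ _ hM hD]
  ring

end improvedDeviation

theorem stmt_5 (M : ℕ) (hM : 2 ≤ M) (δ : ℝ) (hδ : δ ∈ Set.Ioo (0:ℝ) (1 - 1/(M:ℝ)))
    (α β : ℝ) (hα : α = 1/(M:ℝ) + δ) (hβ : β = 1/(M:ℝ) - δ/((M:ℝ) - 1))
    (δ' : ℝ) (hδ' : α^2 / (α^2 + ((M:ℝ) - 1) * β^2) = 1/(M:ℝ) + δ') :
    δ' = δ * (δ * (M:ℝ)^2 - 2 * δ * (M:ℝ) + 2 * (M:ℝ) - 2) / (δ^2 * (M:ℝ)^2 + (M:ℝ) - 1) ∧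
    δ < δ' ∧ δ' < 1 - 1/(M:ℝ) := by
  obtain ⟨hδ0, hδ1⟩ := hδ
  have hM2 : (2 : ℝ) ≤ M := by exact_mod_cast hM
  have hM0 : (0 : ℝ) < M := by linarith
  have hgap : 0 < (M : ℝ) - 1 - δ * M := by
    have := mul_lt_mul_of_pos_right hδ1 hM0
    rw [sub_mul, one_div_mul_cancel hM0.ne', one_mul] at this
    linarith
  have hD : (0 : ℝ) < δ ^ 2 * M ^ 2 + M - 1 := by nlinarith [sq_nonneg (δ * M)]
  have hδ'_eq : δ' = improvedDeviation M δ := by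
    rw [← improvedDeviation_eq hM0.ne' (by linarith) hD.ne', ← hα, ← hβ, hδ']
    ring
  refine ⟨hδ'_eq, ?_, ?_⟩
  · rw [← sub_pos, hδ'_eq, improvedDeviation_sub_self hD.ne']
    positivity
  · rw [← sub_pos, hδ'_eq, one_sub_inv_sub_improvedDeviation hM0.ne' hD.ne']
    positivity
end

section
/- Let M ≥ 2, δ ∈ (0, 1 - 1/M), α = 1/M + δ, β = 1/M - δ/(M-1). For N ≥ 2 let A_N be the diagonal entry of the N-th power of the M×M matrix with diagonal α and off-diagonal β. Then A_N, viewed as a function of δ, is strictly increasing in δ. -/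
/-!
Write `P` for the matrix all of whose entries are `1/M`. It is idempotent, and the matrix of the
statement is `c • (1 - P) + P` with `c = M δ / (M - 1)`. Since `1 - P` and `P` are complementary
idempotents, its `N`-th power is `c ^ N • (1 - P) + P`, whose diagonal entries are
`c ^ N (1 - 1/M) + 1/M`. For `δ > 0` we have `c ≥ 0`, and `c` increases strictly with `δ`,
hence so does `c ^ N` for `N ≥ 1`.
-/

open Matrix

theorem IsIdempotentElem.smul_one_sub_add_pow {K R : Type*} [CommSemiring K] [Ring R]
    [Algebra K R] {P : R} (hP : IsIdempotentElem P) (c : K) (n : ℕ) :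
    (c • (1 - P) + P) ^ n = c ^ n • (1 - P) + P := by
  induction n with
  | zero => simp
  | succ n ih =>
    have hQ : (1 - P) * (1 - P) = 1 - P := hP.one_sub.eq
    rw [pow_succ, ih]
    simp only [add_mul, mul_add, smul_mul_assoc, mul_smul_comm, hQ, hP.mul_one_sub_self,
      hP.one_sub_mul_self, hP.eq, smul_zero, add_zero, zero_add, smul_smul, ← pow_succ']

theorem Matrix.isIdempotentElem_of_inv_card {ι K : Type*} [Fintype ι] [DecidableEq ι] [Field K]
    (h : (Fintype.card ι : K) ≠ 0) :
    IsIdempotentElem (of fun _ _ : ι => (Fintype.card ι : K)⁻¹) := by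
  ext i j
  simp only [mul_apply, of_apply, Finset.sum_const, Finset.card_univ, nsmul_eq_mul]
  field_simp

noncomputable def symmetricChannel (M : ℕ) (δ : ℝ) : Matrix (Fin M) (Fin M) ℝ :=
  of fun i j => if i = j then 1 / (M : ℝ) + δ else 1 / (M : ℝ) - δ / ((M : ℝ) - 1)

theorem symmetricChannel_eq_smul_one_sub_add {M : ℕ} (hM : 1 < M) (δ : ℝ) :
    symmetricChannel M δ =
      (M * δ / (M - 1)) • (1 - of fun _ _ => (M : ℝ)⁻¹) + of fun _ _ => (M : ℝ)⁻¹ := by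
  have hM0 : (M : ℝ) ≠ 0 := by positivity
  have hM1 : (M : ℝ) - 1 ≠ 0 := sub_ne_zero.2 (by exact_mod_cast hM.ne')
  ext i j
  simp only [symmetricChannel, Matrix.add_apply, Matrix.smul_apply, Matrix.sub_apply, one_apply,
    of_apply, smul_eq_mul]
  split_ifs <;> field_simp <;> ring

theorem symmetricChannel_pow_apply_self {M : ℕ} (hM : 1 < M) (δ : ℝ) (n : ℕ) (i : Fin M) :
    (symmetricChannel M δ ^ n) i i =
      (M * δ / (M - 1)) ^ n * (1 - (M : ℝ)⁻¹) + (M : ℝ)⁻¹ := by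
  have hP := isIdempotentElem_of_inv_card (ι := Fin M) (K := ℝ)
    (by rw [Fintype.card_fin]; exact_mod_cast (by omega : M ≠ 0))
  rw [Fintype.card_fin] at hP
  rw [symmetricChannel_eq_smul_one_sub_add hM, hP.smul_one_sub_add_pow]
  simp

theorem stmt_11 (M N : ℕ) (hM : 2 ≤ M) (hN : 2 ≤ N) :
    StrictMonoOn
      (fun δ : ℝ =>
        ((Matrix.of fun i j : Fin M =>
            if i = j then 1/(M:ℝ) + δ else 1/(M:ℝ) - δ/((M:ℝ) - 1)) ^ N)
          ⟨0, by omega⟩ ⟨0, by omega⟩)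
      (Set.Ioo (0:ℝ) (1 - 1/(M:ℝ))) := by
  intro a ha b _ hab
  change (symmetricChannel M a ^ N) _ _ < (symmetricChannel M b ^ N) _ _
  rw [symmetricChannel_pow_apply_self hM, symmetricChannel_pow_apply_self hM]
  have hM' : (1 : ℝ) < M := by exact_mod_cast hM
  have hslope : 0 < 1 - (M : ℝ)⁻¹ := sub_pos.2 (inv_lt_one_of_one_lt₀ hM')
  have hc : M * a / (M - 1) < M * b / (M - 1) := by gcongr
  have hc0 : 0 ≤ M * a / (M - 1) := by have := ha.1; positivity
  gcongr ?_ * _ + _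
  exact pow_lt_pow_left₀ hc hc0 (by omega)
end

section
/- Let M ≥ 2, δ ∈ (0, 1 - 1/M), α = 1/M + δ, β = 1/M - δ/(M-1). A trajectory of length N of the symmetric M-state chain that starts and ends in the correct state but visits exactly k ≥ 1 maximal blocks of incorrect states has probability (1/M)·α^{N-l}·β^{l} for some integer l with 2 ≤ l ≤ min(2k, N). -/
/-!
The probability of a trajectory is `(1/M) α^(N - l) β^l`, where `l` is its number of state
changes. A change at step `n` needs `s n` or `s (n + 1)` to be an incorrect state, so
`l ≤ 2k`; and a trajectory that starts and ends in the correct state but leaves it must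
change state once on the way out and once on the way back, so `2 ≤ l`.
-/

open Finset

namespace Trajectory

variable {σ : Type*} [DecidableEq σ] (s : ℕ → σ)

def changes (N : ℕ) : Finset ℕ := (range N).filter fun n => s n ≠ s (n + 1)

theorem card_changes_le (N : ℕ) : #(changes s N) ≤ N :=
  (card_filter_le _ _).trans (card_range N).le

theorem prod_ite_eq_pow_card_changes {R : Type*} [CommMonoid R] (a b : R) (N : ℕ) :
    ∏ n ∈ range N, (if s n = s (n + 1) then a else b)
      = a ^ (N - #(changes s N)) * b ^ #(changes s N) := by
  have hcard := card_filter_add_card_filter_not (s := range N) (fun n => s n = s (n + 1))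
  rw [card_range] at hcard
  rw [prod_ite, prod_const, prod_const]
  simp only [changes, ne_eq]
  congr 2
  omega

variable {s}

theorem changes_mono : Monotone (changes s) := fun _ _ hab =>
  filter_subset_filter _ (range_mono hab)

theorem lt_of_mem_changes {n N : ℕ} (h : n ∈ changes s N) : n < N :=
  mem_range.1 (mem_filter.1 h).1

theorem exists_mem_changes_of_ne {a b : ℕ} (hab : a ≤ b) (h : s a ≠ s b) :
    ∃ n ∈ changes s b, a ≤ n := by
  induction b, hab using Nat.le_induction with
  | base => exact absurd rfl h
  | succ b hab ih =>
    by_cases hb : s b = s (b + 1)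
    · obtain ⟨n, hn, han⟩ := ih (hb ▸ h)
      exact ⟨n, changes_mono b.le_succ hn, han⟩
    · exact ⟨b, by simp [changes, hb], hab⟩

theorem two_le_card_changes {z : σ} {N m : ℕ} (h0 : s 0 = z) (hN : s N = z) (hmN : m ≤ N)
    (hm : s m ≠ z) : 2 ≤ #(changes s N) := by
  obtain ⟨i, hi, -⟩ := exists_mem_changes_of_ne (Nat.zero_le m) (h0 ▸ hm.symm)
  obtain ⟨j, hj, hmj⟩ := exists_mem_changes_of_ne hmN (hN ▸ hm)
  have hij : i ≠ j := by have := lt_of_mem_changes hi; omega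
  calc 2 = #{i, j} := (card_pair hij).symm
    _ ≤ #(changes s N) := card_le_card <| insert_subset (changes_mono hmN hi) (by simpa using hj)

theorem card_changes_le_two_mul (z : σ) (N : ℕ) :
    #(changes s N) ≤ 2 * #((range (N + 1)).filter fun n => s n ≠ z) := by
  set K := (range (N + 1)).filter fun n => s n ≠ z
  have hsub : changes s N ⊆ K ∪ K.image (· - 1) := by
    intro n hn
    simp only [changes, mem_filter, mem_range] at hn
    by_cases hz : s n = z
    · refine mem_union_right _ (mem_image.2 ⟨n + 1, ?_, rfl⟩)
      exact mem_filter.2 ⟨mem_range.2 (by omega), fun h => hn.2 (hz.trans h.symm)⟩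
    · exact mem_union_left _ (mem_filter.2 ⟨mem_range.2 (by omega), hz⟩)
  calc #(changes s N) ≤ #(K ∪ K.image (· - 1)) := card_le_card hsub
    _ ≤ #K + #(K.image (· - 1)) := card_union_le _ _
    _ ≤ 2 * #K := by linarith [card_image_le (s := K) (f := (· - 1))]

end Trajectory

theorem stmt_15 (M N : ℕ) (hM : 2 ≤ M)
    (α β : ℝ)
    (s : ℕ → Fin M) (h0 : s 0 = ⟨0, by omega⟩) (hend : s N = ⟨0, by omega⟩)
    (k : ℕ)
    (hk : k = ((Finset.range (N+1)).filter (fun n => s n ≠ ⟨0, by omega⟩)).card)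
    (hk1 : 1 ≤ k) :
    ∃ l : ℕ, 2 ≤ l ∧ l ≤ min (2 * k) N ∧
      (1/(M:ℝ)) * ∏ n ∈ Finset.range N, (if s n = s (n+1) then α else β)
        = (1/(M:ℝ)) * α ^ (N - l) * β ^ l := by
  obtain ⟨m, hm⟩ : ((range (N + 1)).filter fun n => s n ≠ ⟨0, by omega⟩).Nonempty := by
    rw [← card_pos, ← hk]; omega
  rw [mem_filter, mem_range] at hm
  refine ⟨#(Trajectory.changes s N), Trajectory.two_le_card_changes h0 hend (by omega) hm.2,
    le_min (hk ▸ Trajectory.card_changes_le_two_mul _ N) (Trajectory.card_changes_le s N), ?_⟩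
  rw [Trajectory.prod_ite_eq_pow_card_changes, mul_assoc]
end

section
/- For M = 2 and δ ∈ (0, 1/2), the two-step return probability J(δ) = (1/2 + δ)² + (1/2 - δ)² satisfies J(δ') > J(δ) where δ' = δ/(2(1/4 + δ²)), and lim over iterated application of the map δ ↦ δ/(2(1/4+δ²)) of J equals 1. -/
/-!
Since `J δ = 1/2 + 2δ²`, everything reduces to the update `δ ↦ δ'`. On `(0, 1/2)` it increases `δ`,
which gives the improvement. Writing `u = 1 - 2δ`, one has `0 ≤ u' ≤ u²`, so along the iteration
`u_t ≤ u_0 ^ 2^t → 0`: the parameter converges (quadratically) to `1/2`, where `J = 1`.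
-/

open Filter Topology

noncomputable def rlStarStep (δ : ℝ) : ℝ := δ / (2 * (1/4 + δ^2))

lemma lt_rlStarStep {δ : ℝ} (h₀ : 0 < δ) (h₁ : δ < 1/2) : δ < rlStarStep δ := by
  rw [rlStarStep, lt_div_iff₀ (by positivity)]
  nlinarith

/-- With `x = 2δ` the update is `x ↦ 2x / (1 + x²)`, and `1 - 2x/(1 + x²) = (1 - x)²/(1 + x²)`. -/
lemma one_sub_two_mul_rlStarStep (δ : ℝ) :
    1 - 2 * rlStarStep δ = (1 - 2 * δ)^2 / (1 + 4 * δ^2) := by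
  have : (0 : ℝ) < 1 + 4 * δ^2 := by positivity
  rw [rlStarStep]
  field_simp
  ring

lemma one_sub_two_mul_rlStarStep_nonneg (δ : ℝ) : 0 ≤ 1 - 2 * rlStarStep δ := by
  rw [one_sub_two_mul_rlStarStep]
  positivity

lemma one_sub_two_mul_rlStarStep_le_sq (δ : ℝ) :
    1 - 2 * rlStarStep δ ≤ (1 - 2 * δ)^2 := by
  rw [one_sub_two_mul_rlStarStep]
  exact div_le_self (sq_nonneg _) (by nlinarith [sq_nonneg δ])

lemma le_pow_two_pow_of_le_sq {u : ℕ → ℝ} (hu : ∀ t, 0 ≤ u t)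
    (hsq : ∀ t, u (t + 1) ≤ u t ^ 2) (t : ℕ) : u t ≤ u 0 ^ 2 ^ t := by
  induction t with
  | zero => simp
  | succ t ih =>
    calc u (t + 1) ≤ u t ^ 2 := hsq t
      _ ≤ (u 0 ^ 2 ^ t) ^ 2 := pow_le_pow_left₀ (hu t) ih 2
      _ = u 0 ^ 2 ^ (t + 1) := by rw [← pow_mul, pow_succ]

lemma tendsto_zero_of_le_sq {u : ℕ → ℝ} (hu : ∀ t, 0 ≤ u t)
    (hsq : ∀ t, u (t + 1) ≤ u t ^ 2) (h₁ : u 0 < 1) : Tendsto u atTop (𝓝 0) := by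
  refine squeeze_zero hu (le_pow_two_pow_of_le_sq hu hsq) ?_
  exact (tendsto_pow_atTop_nhds_zero_of_lt_one (hu 0) h₁).comp
    (tendsto_pow_atTop_atTop_of_one_lt one_lt_two)

lemma tendsto_iterate_rlStarStep {d : ℕ → ℝ} (h₀ : 0 < d 0) (h₁ : d 0 ≤ 1/2)
    (hd : ∀ t, d (t + 1) = rlStarStep (d t)) : Tendsto d atTop (𝓝 (1/2)) := by
  have hu : ∀ t, 0 ≤ 1 - 2 * d t := by
    rintro (_ | t)
    · linarith
    · rw [hd]; exact one_sub_two_mul_rlStarStep_nonneg _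
  have hsq : ∀ t, 1 - 2 * d (t + 1) ≤ (1 - 2 * d t)^2 := fun t => by
    rw [hd]; exact one_sub_two_mul_rlStarStep_le_sq _
  have hlim := (tendsto_zero_of_le_sq hu hsq (by linarith)).const_sub 1
  convert hlim.div_const 2 using 2 <;> norm_num

theorem stmt_17 (J : ℝ → ℝ) (hJ : ∀ δ : ℝ, J δ = (1/2 + δ)^2 + (1/2 - δ)^2) :
    (∀ δ : ℝ, δ ∈ Set.Ioo (0:ℝ) (1/2) → J δ < J (δ / (2 * (1/4 + δ^2)))) ∧
    (∀ d : ℕ → ℝ, d 0 ∈ Set.Ioo (0:ℝ) (1/2) →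
      (∀ t : ℕ, d (t+1) = d t / (2 * (1/4 + (d t)^2))) →
      Tendsto (fun t : ℕ => J (d t)) atTop (𝓝 1)) := by
  have hJ' : J = fun δ => 1/2 + 2 * δ^2 := funext fun δ => by rw [hJ]; ring
  refine ⟨fun δ ⟨h₀, h₁⟩ => ?_, fun d ⟨h₀, h₁⟩ hd => ?_⟩
  · have hsq : δ^2 < rlStarStep δ ^ 2 := pow_lt_pow_left₀ (lt_rlStarStep h₀ h₁) h₀.le two_ne_zero
    show J δ < J (rlStarStep δ)
    simp only [hJ']
    linarith
  · have hlim := tendsto_iterate_rlStarStep h₀ h₁.le hd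
    have hcont : Continuous J := by rw [hJ']; fun_prop
    rw [show (1 : ℝ) = J (1/2) by norm_num [hJ]]
    exact (hcont.tendsto _).comp hlim
end
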